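/- Let γ0 be as above and let ℓ > 3 be an integer with γ_ℓ := π(1 − 1/ℓ) ∈ (γ0, π). Then for every n ∈ ℕ, n ≥ 1, and every family of triples (α1^i, α2^i, γ^i), i = 1,…,n, with γ^i ∈ (γ0, π), α1^i, α2^i ∈ [σ0(γ^i), 2π/3], and mean nonplanarity angle (1/n)·Σ_{i=1}^n γ^i ≤ γ_ℓ, one has Σ_{i=1}^n Ẽ(α1^i, α2^i, γ^i) ≥ n · Ẽ(α_{γ_ℓ}, α_{γ_ℓ}, γ_ℓ). -/
import Mathlib


open Real Set

noncomputable section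

/-- `γ_ℓ := π (1 - 1/ℓ)`. -/
def gammaL (ℓ : ℕ) : ℝ := π * (1 - 1 / ℓ)

/-- `β̃(α1,α2,γ) := 2 arcsin √((1 − sin α1 sin α2 cos γ − cos α1 cos α2)/2)`. -/
def betaTilde (α1 α2 γ : ℝ) : ℝ :=
  2 * Real.arcsin
    (Real.sqrt ((1 - Real.sin α1 * Real.sin α2 * Real.cos γ - Real.cos α1 * Real.cos α2) / 2))

/-- `Ẽ(α1,α2,γ) := v3(α1) + v3(α2) + v3(β̃(α1,α2,γ))`. -/
def Etilde (v3 : ℝ → ℝ) (α1 α2 γ : ℝ) : ℝ := v3 α1 + v3 α2 + v3 (betaTilde α1 α2 γ)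

/-- `σ0(γ) := π − arcsin(√3/(2 sin(γ/2)))`. -/
def sigma0 (γ : ℝ) : ℝ := π - Real.arcsin (Real.sqrt 3 / (2 * Real.sin (γ / 2)))

/-- Let `γ0` be as in the previous statements and let `ℓ > 3` be an integer with
`γ_ℓ ∈ (γ0, π)`.  Then for every `n ≥ 1` and every family of triples `(α1^i, α2^i, γ^i)` with
`γ^i ∈ (γ0, π)`, `α1^i, α2^i ∈ [σ0(γ^i), 2π/3]` and mean nonplanarity angle
`(1/n) Σ γ^i ≤ γ_ℓ`, one has `Σ Ẽ(α1^i, α2^i, γ^i) ≥ n Ẽ(α_{γ_ℓ}, α_{γ_ℓ}, γ_ℓ)`. -/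
theorem sum_Etilde_ge_of_mean_nonplanarity
    (v3 : ℝ → ℝ)
    (hv3_smooth : ContDiff ℝ (⊤ : ℕ∞) v3)
    (hv3_symm : ∀ α : ℝ, v3 (2 * π - α) = v3 α)
    (hv3_nonneg : ∀ α ∈ Icc (0 : ℝ) (2 * π), 0 ≤ v3 α)
    (hv3_min : v3 (2 * π / 3) = 0)
    (hv3_min_only : ∀ α ∈ Icc (0 : ℝ) (2 * π), v3 α = 0 → α = 2 * π / 3 ∨ α = 4 * π / 3)
    (hv3_conv : 0 < iteratedDeriv 2 v3 (2 * π / 3))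
    -- the established properties of `γ0` and of the minimizers `γ ↦ α_γ`:
    (γ0 : ℝ) (αmin : ℝ → ℝ)
    (hγ0 : γ0 ∈ Ico (3 * π / 4) π)
    (hconv : ∀ γ ∈ Ioo γ0 π,
      StrictConvexOn ℝ (Icc (sigma0 γ) (2 * π / 3) ×ˢ Icc (sigma0 γ) (2 * π / 3))
        (fun p : ℝ × ℝ => Etilde v3 p.1 p.2 γ))
    (hαmin : ∀ γ ∈ Ioo γ0 π,
      αmin γ ∈ Ioo (sigma0 γ) (2 * π / 3) ∧
      (∀ p ∈ Icc (sigma0 γ) (2 * π / 3) ×ˢ Icc (sigma0 γ) (2 * π / 3),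
        Etilde v3 (αmin γ) (αmin γ) γ ≤ Etilde v3 p.1 p.2 γ) ∧
      (∀ p ∈ Icc (sigma0 γ) (2 * π / 3) ×ˢ Icc (sigma0 γ) (2 * π / 3),
        (∀ q ∈ Icc (sigma0 γ) (2 * π / 3) ×ˢ Icc (sigma0 γ) (2 * π / 3),
          Etilde v3 p.1 p.2 γ ≤ Etilde v3 q.1 q.2 γ) → p = (αmin γ, αmin γ)))
    (hanti : StrictAntiOn (fun γ => Etilde v3 (αmin γ) (αmin γ) γ) (Ioo γ0 π))
    (hconv2 : StrictConvexOn ℝ (Ioo γ0 π) (fun γ => Etilde v3 (αmin γ) (αmin γ) γ))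
    -- the data of the statement:
    (ℓ : ℕ) (hℓ : 3 < ℓ) (hγℓ : gammaL ℓ ∈ Ioo γ0 π)
    (n : ℕ) (hn : 1 ≤ n)
    (α1 α2 γv : Fin n → ℝ)
    (hγv : ∀ i, γv i ∈ Ioo γ0 π)
    (hα1 : ∀ i, α1 i ∈ Icc (sigma0 (γv i)) (2 * π / 3))
    (hα2 : ∀ i, α2 i ∈ Icc (sigma0 (γv i)) (2 * π / 3))
    (hmean : (∑ i, γv i) / n ≤ gammaL ℓ) :
    ∑ i, Etilde v3 (α1 i) (α2 i) (γv i) ≥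
      n * Etilde v3 (αmin (gammaL ℓ)) (αmin (gammaL ℓ)) (gammaL ℓ) := by
  have hnpos : (0:ℝ) < n := by exact_mod_cast hn
  set f : ℝ → ℝ := fun γ => Etilde v3 (αmin γ) (αmin γ) γ with hfdef
  set m : ℝ := (∑ i, γv i) / n with hmdef
  have hne : (Finset.univ : Finset (Fin n)).Nonempty := by
    simpa [Finset.univ_nonempty_iff] using Fin.pos_iff_nonempty.mp hn
  have hm_mem : m ∈ Ioo γ0 π := by
    constructor
    · rw [hmdef, lt_div_iff₀ hnpos]
      have : γ0 * n = ∑ _i : Fin n, γ0 := by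
        simp [Finset.sum_const, mul_comm]
      rw [this]
      exact Finset.sum_lt_sum_of_nonempty hne fun i _ => (hγv i).1
    · exact lt_of_le_of_lt hmean hγℓ.2
  -- each term dominates f (γv i)
  have key : ∀ i, f (γv i) ≤ Etilde v3 (α1 i) (α2 i) (γv i) := fun i =>
    (hαmin _ (hγv i)).2.1 (α1 i, α2 i) ⟨hα1 i, hα2 i⟩
  -- Jensen
  have hjensen : f m ≤ (∑ i, f (γv i)) / n := by
    have hw : ∀ i ∈ (Finset.univ : Finset (Fin n)), (0:ℝ) ≤ 1 / n := fun _ _ => by positivity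
    have hw1 : ∑ _i : Fin n, (1:ℝ) / n = 1 := by
      simp [Finset.sum_const]
      field_simp
    have := hconv2.convexOn.map_sum_le hw hw1 (fun i _ => hγv i)
    have hm' : (∑ i : Fin n, ((1:ℝ) / n) • γv i) = m := by
      rw [hmdef, Finset.sum_div]
      refine Finset.sum_congr rfl fun i _ => ?_
      rw [smul_eq_mul]; ring
    have hr : (∑ i : Fin n, ((1:ℝ) / n) • f (γv i)) = (∑ i, f (γv i)) / n := by
      rw [Finset.sum_div]
      refine Finset.sum_congr rfl fun i _ => ?_
      rw [smul_eq_mul]; ring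
    rw [hm', hr] at this
    exact this
  have hmono : f (gammaL ℓ) ≤ f m :=
    hanti.antitoneOn hm_mem hγℓ hmean
  have h1 : (n : ℝ) * f (gammaL ℓ) ≤ ∑ i, f (γv i) := by
    have := hjensen
    rw [le_div_iff₀ hnpos] at this
    calc (n : ℝ) * f (gammaL ℓ) ≤ (n : ℝ) * f m := by
          exact mul_le_mul_of_nonneg_left hmono hnpos.le
      _ = f m * n := mul_comm _ _
      _ ≤ ∑ i, f (γv i) := this
  calc (n : ℝ) * Etilde v3 (αmin (gammaL ℓ)) (αmin (gammaL ℓ)) (gammaL ℓ)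
      = (n : ℝ) * f (gammaL ℓ) := rfl
    _ ≤ ∑ i, f (γv i) := h1
    _ ≤ ∑ i, Etilde v3 (α1 i) (α2 i) (γv i) := Finset.sum_le_sum fun i _ => key i

end
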